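/- arXiv:2409.14528 — 3 statements merged into one kernel-verified Lean document; each statement's English description precedes it below -/
import Mathlib

section
/- Let G be an MP-digraph without coherently oriented cycles (loops included). An edge e = (v,w) of G is a coloop of the multipath matroid M_G if and only if the outdegree of v in G is at most 1 and the indegree of w in G is at most 1. -/
set_option autoImplicit false

noncomputable section

attribute [local instance] Classical.propDecidable

/-- A (finite) directed multigraph: finitely many vertices and edges, each edge
has a source and a target.  (Loops and, a priori, parallel edges are allowed;
the paper's convention of at most one edge between an ordered pair of distinct
vertices is imposed via `DiGraph.EdgeUnique`.) -/
structure DiGraph where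
  V : Type
  E : Type
  [fintV : Fintype V]
  [decV : DecidableEq V]
  [fintE : Fintype E]
  [decE : DecidableEq E]
  s : E → V
  t : E → V

attribute [instance] DiGraph.fintV DiGraph.decV DiGraph.fintE DiGraph.decE

namespace DiGraph

/-- For each ordered pair of *distinct* vertices there is at most one edge. -/
def EdgeUnique (G : DiGraph) : Prop :=
  ∀ e f : G.E, G.s e = G.s f → G.t e = G.t f → G.s e ≠ G.t e → e = f

/-- G has no loops. -/
def Loopless (G : DiGraph) : Prop := ∀ e : G.E, G.s e ≠ G.t e

/-- A coherently oriented cycle, given as the (cyclically ordered) list of its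
edges: the list is nonempty, has no repeated edges, visits no vertex twice,
and the target of each edge is the source of the next one (cyclically).
A loop is a coherently oriented cycle of length 1. -/
def IsCohCycle (G : DiGraph) (c : List G.E) : Prop :=
  c ≠ [] ∧ c.Nodup ∧ (c.map G.s).Nodup ∧
    ∀ i : Fin c.length,
      G.t (c.get i) =
        G.s (c.get ⟨(i.val + 1) % c.length,
          Nat.mod_lt _ (Nat.lt_of_le_of_lt (Nat.zero_le _) i.isLt)⟩)

/-- `m` is (the edge set of) a multipath of `G`: the corresponding spanning
subgraph has no loops, in-degree and out-degree at most one at each vertex, and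
contains no coherently oriented cycle; equivalently, every connected component
is a single vertex or a simple (directed) path. -/
def IsMultipath (G : DiGraph) (m : Finset G.E) : Prop :=
  (∀ e ∈ m, G.s e ≠ G.t e) ∧
  (∀ e ∈ m, ∀ f ∈ m, G.s e = G.s f → e = f) ∧
  (∀ e ∈ m, ∀ f ∈ m, G.t e = G.t f → e = f) ∧
  ¬∃ c : List G.E, IsCohCycle G c ∧ ∀ g ∈ c, g ∈ m

/-- The forbidden pattern (A): vertices v0,v1,v2 and edges (v1,v0), (v0,v2), (v1,v2). -/
def HasPatternA (G : DiGraph) : Prop :=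
  ∃ v0 v1 v2 : G.V, v0 ≠ v1 ∧ v0 ≠ v2 ∧ v1 ≠ v2 ∧
    (∃ e : G.E, G.s e = v1 ∧ G.t e = v0) ∧
    (∃ e : G.E, G.s e = v0 ∧ G.t e = v2) ∧
    (∃ e : G.E, G.s e = v1 ∧ G.t e = v2)

/-- The reverse of pattern (A). -/
def HasPatternArev (G : DiGraph) : Prop :=
  ∃ v0 v1 v2 : G.V, v0 ≠ v1 ∧ v0 ≠ v2 ∧ v1 ≠ v2 ∧
    (∃ e : G.E, G.s e = v0 ∧ G.t e = v1) ∧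
    (∃ e : G.E, G.s e = v2 ∧ G.t e = v0) ∧
    (∃ e : G.E, G.s e = v2 ∧ G.t e = v1)

/-- The forbidden pattern (B): vertices v0,v1,v2,v3 and edges (v0,v1), (v2,v1), (v2,v3). -/
def HasPatternB (G : DiGraph) : Prop :=
  ∃ v0 v1 v2 v3 : G.V,
    v0 ≠ v1 ∧ v0 ≠ v2 ∧ v0 ≠ v3 ∧ v1 ≠ v2 ∧ v1 ≠ v3 ∧ v2 ≠ v3 ∧
    (∃ e : G.E, G.s e = v0 ∧ G.t e = v1) ∧
    (∃ e : G.E, G.s e = v2 ∧ G.t e = v1) ∧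
    (∃ e : G.E, G.s e = v2 ∧ G.t e = v3)

/-- The reverse of pattern (B). -/
def HasPatternBrev (G : DiGraph) : Prop :=
  ∃ v0 v1 v2 v3 : G.V,
    v0 ≠ v1 ∧ v0 ≠ v2 ∧ v0 ≠ v3 ∧ v1 ≠ v2 ∧ v1 ≠ v3 ∧ v2 ≠ v3 ∧
    (∃ e : G.E, G.s e = v1 ∧ G.t e = v0) ∧
    (∃ e : G.E, G.s e = v1 ∧ G.t e = v2) ∧
    (∃ e : G.E, G.s e = v3 ∧ G.t e = v2)

/-- (MP1): G contains no copy, up to reversing all orientations, of the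
patterns (A) and (B). -/
def MP1 (G : DiGraph) : Prop :=
  ¬HasPatternA G ∧ ¬HasPatternArev G ∧ ¬HasPatternB G ∧ ¬HasPatternBrev G

/-- (MP2): every coherently oriented cycle of length ≥ 2 (i.e. loops excluded)
is a connected component: any edge incident to a vertex of the cycle belongs
to the cycle. -/
def MP2 (G : DiGraph) : Prop :=
  ∀ c : List G.E, IsCohCycle G c → 2 ≤ c.length →
    ∀ f : G.E, (∃ g ∈ c, G.s g = G.s f ∨ G.s g = G.t f) → f ∈ c

def IsMPDigraph (G : DiGraph) : Prop := MP1 G ∧ MP2 G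

/-- The axioms (I1), (I2), (I3) for a family of independent sets of a matroid. -/
def IsIndepFamily {α : Type} [DecidableEq α] (I : Finset α → Prop) : Prop :=
  I ∅ ∧ (∀ A B : Finset α, I A → B ⊆ A → I B) ∧
    ∀ A B : Finset α, I A → I B → B.card < A.card →
      ∃ x ∈ A, x ∉ B ∧ I (insert x B)

/-- `m` is the edge set of a linear sink (two non-loop edges with a common
target and distinct sources). -/
def IsLinearSinkSet (G : DiGraph) (m : Finset G.E) : Prop :=
  ∃ e1 e2 : G.E, e1 ≠ e2 ∧ m = {e1, e2} ∧ G.t e1 = G.t e2 ∧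
    G.s e1 ≠ G.s e2 ∧ G.s e1 ≠ G.t e1 ∧ G.s e2 ≠ G.t e2

/-- `m` is the edge set of a linear source (two non-loop edges with a common
source and distinct targets). -/
def IsLinearSourceSet (G : DiGraph) (m : Finset G.E) : Prop :=
  ∃ e1 e2 : G.E, e1 ≠ e2 ∧ m = {e1, e2} ∧ G.s e1 = G.s e2 ∧
    G.t e1 ≠ G.t e2 ∧ G.s e1 ≠ G.t e1 ∧ G.s e2 ≠ G.t e2

/-- `m` is the edge set of a coherently oriented cycle (possibly a loop). -/
def IsCohCycleSet (G : DiGraph) (m : Finset G.E) : Prop :=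
  ∃ c : List G.E, IsCohCycle G c ∧ m = c.toFinset

/-- Two vertices are adjacent if they are the endpoints of a common edge. -/
def adj (G : DiGraph) (v w : G.V) : Prop :=
  ∃ e : G.E, (G.s e = v ∧ G.t e = w) ∨ (G.s e = w ∧ G.t e = v)

/-- Two vertices lie in the same connected component. -/
def connRel (G : DiGraph) : G.V → G.V → Prop := Relation.EqvGen (adj G)

/-- G is connected. -/
def ConnectedD (G : DiGraph) : Prop := Nonempty G.V ∧ ∀ v w : G.V, connRel G v w

/-- The number of connected components of G (isolated vertices count). -/
def numComponents (G : DiGraph) : ℕ :=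
  Nat.card (Quotient (Relation.EqvGen.setoid (adj G)))

/-- `S` is the set of edges of one of the connected components of `G`. -/
def IsComponentEdges (G : DiGraph) (S : Finset G.E) : Prop :=
  ∃ v : G.V, S = Finset.univ.filter (fun e => connRel G v (G.s e))

/-- in-degree of `v` in the subgraph spanned by the edges of `R`. -/
def indegIn (G : DiGraph) (R : Finset G.E) (v : G.V) : ℕ :=
  (R.filter (fun e => G.t e = v)).card

/-- out-degree of `v` in the subgraph spanned by the edges of `R`. -/
def outdegIn (G : DiGraph) (R : Finset G.E) (v : G.V) : ℕ :=
  (R.filter (fun e => G.s e = v)).card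

def indeg (G : DiGraph) (v : G.V) : ℕ := indegIn G Finset.univ v
def outdeg (G : DiGraph) (v : G.V) : ℕ := outdegIn G Finset.univ v

/-- `v` is a vertex of the subgraph spanned by the edge set `R`. -/
def IncidentTo (G : DiGraph) (R : Finset G.E) (v : G.V) : Prop :=
  ∃ e ∈ R, G.s e = v ∨ G.t e = v

/-- `v` is stable in the subgraph spanned by `R`. -/
def StableIn (G : DiGraph) (R : Finset G.E) (v : G.V) : Prop :=
  indegIn G R v = 0 ∨ outdegIn G R v = 0

/-- `v` is unstable in `G`. -/
def UnstableG (G : DiGraph) (v : G.V) : Prop :=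
  0 < indeg G v ∧ 0 < outdeg G v

/-- adjacency within the subgraph spanned by `R`. -/
def adjIn (G : DiGraph) (R : Finset G.E) (a b : G.V) : Prop :=
  ∃ g ∈ R, (G.s g = a ∧ G.t g = b) ∨ (G.s g = b ∧ G.t g = a)

/-- The subgraph spanned by the edge set `R` is connected. -/
def EdgeConnected (G : DiGraph) (R : Finset G.E) : Prop :=
  ∀ e ∈ R, ∀ f ∈ R, Relation.EqvGen (adjIn G R) (G.s e) (G.s f)

/-- `R` spans a dynamical region of `G`: it is connected, has at least one
edge, every boundary vertex is unstable in `G` but stable in `R` and in its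
complement, and no edge of `R` lies on an oriented cycle of `G` not contained
in `R`. -/
def IsDynRegion (G : DiGraph) (R : Finset G.E) : Prop :=
  R.Nonempty ∧ EdgeConnected G R ∧
  (∀ v : G.V, IncidentTo G R v → IncidentTo G (Finset.univ \ R) v →
     UnstableG G v ∧ StableIn G R v ∧ StableIn G (Finset.univ \ R) v) ∧
  (∀ c : List G.E, IsCohCycle G c → (∃ g ∈ c, g ∈ R) → ∀ g ∈ c, g ∈ R)

/-- A dynamical module is a minimal dynamical region. -/
def IsDynModule (G : DiGraph) (R : Finset G.E) : Prop :=
  IsDynRegion G R ∧ ∀ R' ⊆ R, IsDynRegion G R' → R' = R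

/-- `G` is a sink on `n+1` vertices. -/
def IsSinkGraph (G : DiGraph) : Prop :=
  Loopless G ∧ Fintype.card G.V = Fintype.card G.E + 1 ∧
    ∃! v : G.V, ∀ e : G.E, G.t e = v

/-- `G` is a source on `n+1` vertices. -/
def IsSourceGraph (G : DiGraph) : Prop :=
  Loopless G ∧ Fintype.card G.V = Fintype.card G.E + 1 ∧
    ∃! v : G.V, ∀ e : G.E, G.s e = v

/-- `R` spans a sink: all its edges are non-loops with a common target and
pairwise distinct sources. -/
def IsSinkSet (G : DiGraph) (R : Finset G.E) : Prop :=
  ∃ v : G.V, (∀ e ∈ R, G.t e = v ∧ G.s e ≠ v) ∧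
    ∀ e ∈ R, ∀ f ∈ R, G.s e = G.s f → e = f

/-- `R` spans a source. -/
def IsSourceSet (G : DiGraph) (R : Finset G.E) : Prop :=
  ∃ v : G.V, (∀ e ∈ R, G.s e = v ∧ G.t e ≠ v) ∧
    ∀ e ∈ R, ∀ f ∈ R, G.t e = G.t f → e = f

/-- The whole digraph `G` is a coherently oriented cycle. -/
def IsCohCycleGraph (G : DiGraph) : Prop :=
  ∃ c : List G.E, IsCohCycle G c ∧ (∀ e : G.E, e ∈ c) ∧
    ∀ v : G.V, ∃ g ∈ c, G.s g = v

/-- Rank function of the multipath matroid: the size of a largest multipath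
contained in `A`. -/
def mrank (G : DiGraph) (A : Finset G.E) : ℕ :=
  (A.powerset.filter (fun m => IsMultipath G m)).sup Finset.card

/-- The Tutte polynomial of the multipath matroid of `G`, evaluated at `(x,y)`. -/
def tutte (G : DiGraph) (x y : ℤ) : ℤ :=
  ∑ A : Finset G.E,
    (x - 1) ^ (mrank G Finset.univ - mrank G A) *
      (y - 1) ^ (A.card - mrank G A)

/-- `e` is a loop of the multipath matroid. -/
def IsMatroidLoop (G : DiGraph) (e : G.E) : Prop := ¬IsMultipath G {e}

/-- `e` is a coloop of the multipath matroid: it belongs to every maximal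
independent set. -/
def IsColoop (G : DiGraph) (e : G.E) : Prop :=
  ∀ m : Finset G.E, IsMultipath G m →
    (∀ m' : Finset G.E, IsMultipath G m' → m ⊆ m' → m' = m) → e ∈ m

/-- The digraph obtained from `G` by deleting the edge `e`. -/
def deleteEdge (G : DiGraph) (e : G.E) : DiGraph where
  V := G.V
  E := {f : G.E // f ≠ e}
  s := fun f => G.s f.val
  t := fun f => G.t f.val

/-- The vertex set of the MP-contraction `G ⫽ e`: the vertices of `G` other
than the endpoints of `e`, together with a new vertex `x = Sum.inr ()`. -/
def CVert (G : DiGraph) (e : G.E) : Type :=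
  {u : G.V // u ≠ G.s e ∧ u ≠ G.t e} ⊕ Unit

instance (G : DiGraph) (e : G.E) : Fintype (CVert G e) := by
  unfold CVert; infer_instance

instance (G : DiGraph) (e : G.E) : DecidableEq (CVert G e) := by
  unfold CVert; infer_instance

/-- Source, in `G ⫽ e`, of the edge coming from the edge `f` of `G`
(for `e = (v,w)`, the new source is `x` iff `s f ∈ {v,w}` or `t f = w`). -/
def contrS (G : DiGraph) (e f : G.E) : CVert G e :=
  if h : G.s f = G.s e ∨ G.s f = G.t e ∨ G.t f = G.t e then Sum.inr ()
  else Sum.inl ⟨G.s f, by push_neg at h; exact ⟨h.1, h.2.1⟩⟩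

/-- Target, in `G ⫽ e`, of the edge coming from the edge `f` of `G`
(for `e = (v,w)`, the new target is `x` iff `t f ∈ {v,w}` or `s f = v`). -/
def contrT (G : DiGraph) (e f : G.E) : CVert G e :=
  if h : G.t f = G.s e ∨ G.t f = G.t e ∨ G.s f = G.s e then Sum.inr ()
  else Sum.inl ⟨G.t f, by push_neg at h; exact ⟨h.1, h.2.1⟩⟩

/-- The MP-contraction `G ⫽ e`. -/
def mpContract (G : DiGraph) (e : G.E) : DiGraph where
  V := CVert G e
  E := {f : G.E // f ≠ e}
  s := fun f => contrS G e f.val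
  t := fun f => contrT G e f.val

/-- The digraph `C̃_e(G)`: the MP-contraction `G ⫽ e` with all loops at the
new vertex `x` deleted. -/
def tildeC (G : DiGraph) (e : G.E) : DiGraph where
  V := CVert G e
  E := {f : G.E // f ≠ e ∧
         ¬(contrS G e f = Sum.inr () ∧ contrT G e f = Sum.inr ())}
  s := fun f => contrS G e f.val
  t := fun f => contrT G e f.val

/-- The classical contraction `G / e` of a non-loop edge `e = (v,w)`:
identify `w` with `v` and delete `e`. -/
def contractClassical (G : DiGraph) (e : G.E) (hne : G.s e ≠ G.t e) : DiGraph where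
  V := {u : G.V // u ≠ G.t e}
  E := {f : G.E // f ≠ e}
  s := fun f => if h : G.s f.val = G.t e then ⟨G.s e, hne⟩ else ⟨G.s f.val, h⟩
  t := fun f => if h : G.t f.val = G.t e then ⟨G.s e, hne⟩ else ⟨G.t f.val, h⟩

/-- A flowing k-colouring of `G`. -/
def IsFlowing (G : DiGraph) (k : ℕ) (c : G.V → Fin k) : Prop :=
  (∀ e : G.E, c (G.s e) ≠ c (G.t e)) ∧
  (∀ e f : G.E, G.t e = G.t f → c (G.s e) = c (G.s f)) ∧
  (∀ e f : G.E, G.s e = G.s f → c (G.t e) = c (G.t f))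

/-- The number of flowing k-colourings of `G`. -/
def tau (G : DiGraph) (k : ℕ) : ℕ :=
  Nat.card {c : G.V → Fin k // IsFlowing G k c}

/-- The spanning subgraph of `G` with edge set `S`. -/
def subgraphOn (G : DiGraph) (S : Finset G.E) : DiGraph where
  V := G.V
  E := {f : G.E // f ∈ S}
  s := fun f => G.s f.val
  t := fun f => G.t f.val

/-- The underlying undirected multigraph of `G` contains a cycle
(of length ≥ 1; a single loop, or two parallel/antiparallel edges, count). -/
def HasUndirCycle (G : DiGraph) : Prop :=
  ∃ (n : ℕ) (ed : Fin n → G.E) (vx : Fin n → G.V),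
    0 < n ∧ Function.Injective ed ∧ Function.Injective vx ∧
    ∀ i : Fin n,
      (G.s (ed i) = vx i ∧ G.t (ed i) = vx ⟨(i.val + 1) % n, Nat.mod_lt _ i.pos⟩) ∨
      (G.t (ed i) = vx i ∧ G.s (ed i) = vx ⟨(i.val + 1) % n, Nat.mod_lt _ i.pos⟩)

/-- The underlying undirected multigraph of `G` is a forest. -/
def IsForestD (G : DiGraph) : Prop := ¬HasUndirCycle G

/-- The underlying undirected multigraph of `G` is a tree. -/
def IsTreeD (G : DiGraph) : Prop := ConnectedD G ∧ IsForestD G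

/-- The multipath matroid of `G` is representable over the field `F`. -/
def RepOver (G : DiGraph) (F : Type) [Field F] : Prop :=
  ∃ (n : ℕ) (N : Matrix (Fin n) G.E F),
    ∀ m : Finset G.E, IsMultipath G m ↔
      LinearIndependent F (fun f : {x : G.E // x ∈ m} => N.transpose f.val)

end DiGraph

/-- A finite undirected multigraph. -/
structure Multigraph where
  V : Type
  E : Type
  [fintV : Fintype V]
  [decV : DecidableEq V]
  [fintE : Fintype E]
  [decE : DecidableEq E]
  ends : E → Sym2 V

attribute [instance] Multigraph.fintV Multigraph.decV Multigraph.fintE Multigraph.decE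

/-- The multigraph `M` has a cycle all of whose edges lie in `F`. -/
def Multigraph.HasCycleIn (M : Multigraph) (F : Finset M.E) : Prop :=
  ∃ (n : ℕ) (ed : Fin n → M.E) (vx : Fin n → M.V),
    0 < n ∧ Function.Injective ed ∧ Function.Injective vx ∧
    (∀ i : Fin n, ed i ∈ F) ∧
    ∀ i : Fin n, M.ends (ed i) = s(vx i, vx ⟨(i.val + 1) % n, Nat.mod_lt _ i.pos⟩)

namespace DiGraph

lemma loopless_of_noCycle (G : DiGraph) (hnc : ¬∃ c : List G.E, G.IsCohCycle c)
    (f : G.E) : G.s f ≠ G.t f := by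
  intro h
  apply hnc
  refine ⟨[f], ?_, ?_, ?_, ?_⟩
  · simp
  · simp
  · simp
  · intro i
    fin_cases i
    simpa using h.symm

lemma mult_of (G : DiGraph) (hnc : ¬∃ c : List G.E, G.IsCohCycle c)
    (m : Finset G.E)
    (hs : ∀ e ∈ m, ∀ f ∈ m, G.s e = G.s f → e = f)
    (ht : ∀ e ∈ m, ∀ f ∈ m, G.t e = G.t f → e = f) : G.IsMultipath m := by
  refine ⟨fun e _ => G.loopless_of_noCycle hnc e, hs, ht, ?_⟩
  rintro ⟨c, hc, -⟩
  exact hnc ⟨c, hc⟩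

lemma exists_maximal_ext (G : DiGraph) (m0 : Finset G.E) (h0 : G.IsMultipath m0) :
    ∃ m : Finset G.E, G.IsMultipath m ∧ m0 ⊆ m ∧
      ∀ m' : Finset G.E, G.IsMultipath m' → m ⊆ m' → m' = m := by
  classical
  set S := (Finset.univ : Finset G.E).powerset.filter
      (fun m => G.IsMultipath m ∧ m0 ⊆ m) with hSdef
  have hS : m0 ∈ S := by
    simp [hSdef, h0]
  obtain ⟨m, hm, hmax⟩ := S.exists_max_image Finset.card ⟨m0, hS⟩
  simp only [hSdef, Finset.mem_filter] at hm
  refine ⟨m, hm.2.1, hm.2.2, ?_⟩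
  intro m' hm' hsub
  have hm'S : m' ∈ S := by
    simp [hSdef, hm', hm.2.2.trans hsub]
  exact (Finset.eq_of_subset_of_card_le hsub (hmax m' hm'S)).symm

end DiGraph

/-- In an MP-digraph without coherently oriented cycles
(loops included), an edge `e = (v,w)` is a coloop of the multipath matroid iff
the out-degree of `v` is at most 1 and the in-degree of `w` is at most 1. -/
theorem coloop_iff_degree_conditions (G : DiGraph) (hU : G.EdgeUnique)
    (hMP : G.IsMPDigraph) (hnc : ¬∃ c : List G.E, G.IsCohCycle c) (e : G.E) :
    DiGraph.IsColoop G e ↔ G.outdeg (G.s e) ≤ 1 ∧ G.indeg (G.t e) ≤ 1 := by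
  constructor
  · intro hco
    constructor
    · by_contra h
      push_neg at h
      simp only [DiGraph.outdeg, DiGraph.outdegIn] at h
      obtain ⟨f, hf, hfe⟩ := Finset.exists_mem_ne h e
      simp only [Finset.mem_filter, Finset.mem_univ, true_and] at hf
      have h1 : G.IsMultipath {f} := DiGraph.mult_of G hnc {f}
        (by intro a ha b hb _; simp only [Finset.mem_singleton] at ha hb; rw [ha, hb])
        (by intro a ha b hb _; simp only [Finset.mem_singleton] at ha hb; rw [ha, hb])
      obtain ⟨m, hm, hsub, hmax⟩ := DiGraph.exists_maximal_ext G {f} h1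
      have he : e ∈ m := hco m hm hmax
      have hfm : f ∈ m := hsub (Finset.mem_singleton_self f)
      exact hfe (hm.2.1 f hfm e he hf)
    · by_contra h
      push_neg at h
      simp only [DiGraph.indeg, DiGraph.indegIn] at h
      obtain ⟨f, hf, hfe⟩ := Finset.exists_mem_ne h e
      simp only [Finset.mem_filter, Finset.mem_univ, true_and] at hf
      have h1 : G.IsMultipath {f} := DiGraph.mult_of G hnc {f}
        (by intro a ha b hb _; simp only [Finset.mem_singleton] at ha hb; rw [ha, hb])
        (by intro a ha b hb _; simp only [Finset.mem_singleton] at ha hb; rw [ha, hb])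
      obtain ⟨m, hm, hsub, hmax⟩ := DiGraph.exists_maximal_ext G {f} h1
      have he : e ∈ m := hco m hm hmax
      have hfm : f ∈ m := hsub (Finset.mem_singleton_self f)
      exact hfe (hm.2.2.1 f hfm e he hf)
  · rintro ⟨ho, hi⟩ m hm hmax
    by_contra hem
    simp only [DiGraph.outdeg, DiGraph.outdegIn] at ho
    simp only [DiGraph.indeg, DiGraph.indegIn] at hi
    have hmult : G.IsMultipath (insert e m) := by
      apply DiGraph.mult_of G hnc
      · intro a ha b hb hab
        rcases Finset.mem_insert.mp ha with rfl | ha'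
        · rcases Finset.mem_insert.mp hb with rfl | hb'
          · rfl
          · exact (Finset.card_le_one.mp ho b
              (by simp [hab.symm]) a (by simp)).symm
        · rcases Finset.mem_insert.mp hb with rfl | hb'
          · exact Finset.card_le_one.mp ho a (by simp [hab]) b (by simp)
          · exact hm.2.1 a ha' b hb' hab
      · intro a ha b hb hab
        rcases Finset.mem_insert.mp ha with rfl | ha'
        · rcases Finset.mem_insert.mp hb with rfl | hb'
          · rfl
          · exact (Finset.card_le_one.mp hi b
              (by simp [hab.symm]) a (by simp)).symm
        · rcases Finset.mem_insert.mp hb with rfl | hb'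
          · exact Finset.card_le_one.mp hi a (by simp [hab]) b (by simp)
          · exact hm.2.2.1 a ha' b hb' hab
    have := hmax (insert e m) hmult (Finset.subset_insert e m)
    exact hem (this ▸ Finset.mem_insert_self e m)
end
end

section
/- Let G be an MP-tree and suppose there exists an edge e = (v,w) that is a coloop of the multipath matroid M_G. Then for every integer k ≥ 1, the number of flowing k-colourings satisfies τ_G(k) = (k-1) · τ_{G/e}(k), where G/e is the classical graph contraction of e (identifying v and w). -/
set_option autoImplicit false

noncomputable section

attribute [local instance] Classical.propDecidable

/-!
A coloop `e = (v, w)` of the multipath matroid lies in every maximal multipath, so it is the only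
edge leaving `v` and the only edge entering `w`. Hence a colouring of `G` is flowing iff it is
flowing on `G - e` and separates `v` and `w`, while the flowing colourings of `G / e` are those of
`G - e` that agree on `v` and `w`. As `G` is a forest, `v` and `w` lie in different components of
`G - e`, and permuting the colours on the component of `w` turns each colouring of the second kind
into exactly `k - 1` colourings of the first.
-/

namespace DiGraph

theorem connRel.reachable {H : DiGraph} {a b : H.V} (h : H.connRel a b) :
    (SimpleGraph.fromRel H.adj).Reachable a b := by
  induction h with
  | rel a b hab =>
    by_cases hab' : a = b
    · exact hab' ▸ .refl a
    · exact SimpleGraph.Adj.reachable ((SimpleGraph.fromRel_adj _ _ _).2 ⟨hab', .inl hab⟩)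
  | refl => exact .refl _
  | symm _ _ _ ih => exact ih.symm
  | trans _ _ _ _ _ ih₁ ih₂ => exact ih₁.trans ih₂

def Joins (G : DiGraph) (g : G.E) (a b : G.V) : Prop :=
  G.s g = a ∧ G.t g = b ∨ G.s g = b ∧ G.t g = a

theorem Joins.eq_of_injOn {G : DiGraph} {x : ℕ → G.V} {n i j : ℕ}
    (hx : Set.InjOn x {i | i ≤ n}) (hi : i < n) (hj : j < n) {g : G.E}
    (hgi : G.Joins g (x i) (x (i + 1))) (hgj : G.Joins g (x j) (x (j + 1))) : i = j := by
  have hx' {a b : ℕ} (ha : a ≤ n) (hb : b ≤ n) (hab : x a = x b) : a = b := hx ha hb hab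
  rcases hgi with ⟨h₁, h₂⟩ | ⟨h₁, h₂⟩ <;> rcases hgj with ⟨h₃, h₄⟩ | ⟨h₃, h₄⟩ <;>
    have := hx' (by omega) (by omega) (h₁.symm.trans h₃) <;>
    have := hx' (by omega) (by omega) (h₂.symm.trans h₄) <;> omega

/-- A path from `t e` to `s e` avoiding `e`, closed up by `e`, is a cycle. -/
theorem IsForestD.not_connRel_deleteEdge {G : DiGraph} (hf : G.IsForestD) (e : G.E) :
    ¬(G.deleteEdge e).connRel (G.s e) (G.t e) := by
  intro h
  obtain ⟨p, hp⟩ := (connRel.reachable (h.symm _ _)).some.toPath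
  set n := p.length
  set x := p.getVert
  have hstep (i : ℕ) (hi : i < n) : ∃ g : G.E, g ≠ e ∧ G.Joins g (x i) (x (i + 1)) := by
    obtain ⟨-, ⟨g, hg⟩ | ⟨g, hg⟩⟩ := (SimpleGraph.fromRel_adj _ _ _).1 (p.adj_getVert_succ hi)
    · exact ⟨g.1, g.2, hg⟩
    · exact ⟨g.1, g.2, hg.symm⟩
  choose g hge hg using hstep
  refine hf ⟨n + 1, fun i => if hi : i.1 < n then g i hi else e, fun i => x i, n.succ_pos,
    fun i j hij => Fin.ext ?_, fun i j hij => Fin.ext (hp.getVert_injOn (by simp; omega)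
      (by simp; omega) hij), fun i => ?_⟩
  · dsimp only at hij
    by_cases hi : i.1 < n <;> by_cases hj : j.1 < n
    · rw [dif_pos hi, dif_pos hj] at hij
      exact Joins.eq_of_injOn (G := G) (x := x) hp.getVert_injOn hi hj (hg i hi) (hij ▸ hg j hj)
    · exact absurd ((dif_pos hi).symm.trans (hij.trans (dif_neg hj))) (hge i hi)
    · exact absurd ((dif_pos hj).symm.trans (hij.symm.trans (dif_neg hi))) (hge j hj)
    · omega
  · dsimp only
    by_cases hi : i.1 < n
    · rw [dif_pos hi, Nat.mod_eq_of_lt (by omega : i.1 + 1 < n + 1)]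
      exact (hg i hi).imp id And.symm
    · rw [dif_neg hi]
      have hin : i.1 = n := by omega
      simp only [hin, Nat.mod_self]
      exact .inl ⟨p.getVert_length.symm, p.getVert_zero.symm⟩

theorem IsForestD.loopless {G : DiGraph} (hf : G.IsForestD) : G.Loopless := by
  intro f hloop
  refine hf ⟨1, fun _ => f, fun _ => G.s f, Nat.one_pos, fun a b _ => Subsingleton.elim a b,
    fun a b _ => Subsingleton.elim a b, fun _ => Or.inl ⟨rfl, hloop.symm⟩⟩

theorem isMultipath_singleton {G : DiGraph} {f : G.E} (hf : G.s f ≠ G.t f) :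
    G.IsMultipath {f} := by
  refine ⟨by simpa using hf, by simp, by simp, ?_⟩
  rintro ⟨c, ⟨hc, -, -, hcyc⟩, hsub⟩
  simp only [Finset.mem_singleton] at hsub
  have hlen : 0 < c.length := List.length_pos_iff.mpr hc
  have h0 := hcyc ⟨0, hlen⟩
  rw [hsub _ (List.get_mem _ _), hsub _ (List.get_mem _ _)] at h0
  exact hf h0.symm

section Coloop

variable {G : DiGraph} {e : G.E}

theorem IsColoop.exists_multipath_superset_mem (hco : G.IsColoop e) {m : Finset G.E}
    (hm : G.IsMultipath m) : ∃ m' : Finset G.E, G.IsMultipath m' ∧ m ⊆ m' ∧ e ∈ m' := by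
  obtain ⟨m', hmm', hmax⟩ := Finite.exists_le_maximal hm
  exact ⟨m', hmax.prop, hmm', hco m' hmax.prop fun m'' hm'' h => (hmax.le_of_ge hm'' h).antisymm h⟩

theorem IsColoop.eq_of_source_eq (hco : G.IsColoop e) (hl : G.Loopless) {f : G.E}
    (hf : G.s f = G.s e) : f = e := by
  obtain ⟨m, hm, hfm, hem⟩ := hco.exists_multipath_superset_mem (isMultipath_singleton (hl f))
  exact hm.2.1 f (hfm (Finset.mem_singleton_self f)) e hem hf

theorem IsColoop.eq_of_target_eq (hco : G.IsColoop e) (hl : G.Loopless) {f : G.E}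
    (hf : G.t f = G.t e) : f = e := by
  obtain ⟨m, hm, hfm, hem⟩ := hco.exists_multipath_superset_mem (isMultipath_singleton (hl f))
  exact hm.2.2.1 f (hfm (Finset.mem_singleton_self f)) e hem hf

end Coloop

theorem eq_or_ne_and_ne_of_apply_eq {α β : Type*} {φ : α → β} {a : α}
    (hφ : ∀ x, φ x = φ a → x = a) {x y : α} (h : φ x = φ y) : x = y ∨ x ≠ a ∧ y ≠ a := by
  by_cases hx : x = a
  · subst hx; exact Or.inl (hφ y h.symm).symm
  · by_cases hy : y = a
    · subst hy; exact absurd (hφ x h) hx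
    · exact Or.inr ⟨hx, hy⟩

section Contraction

variable {G : DiGraph} {e : G.E} {k : ℕ}

theorem isFlowing_iff_deleteEdge (hs : ∀ f, G.s f = G.s e → f = e)
    (ht : ∀ f, G.t f = G.t e → f = e) (c : G.V → Fin k) :
    G.IsFlowing k c ↔ (G.deleteEdge e).IsFlowing k c ∧ c (G.s e) ≠ c (G.t e) := by
  constructor
  · rintro ⟨hprop, hsrc, htgt⟩
    exact ⟨⟨fun f => hprop f.1, fun f g => hsrc f.1 g.1, fun f g => htgt f.1 g.1⟩, hprop e⟩
  · rintro ⟨⟨hprop, hsrc, htgt⟩, hve⟩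
    refine ⟨fun f => ?_, fun f g hfg => ?_, fun f g hfg => ?_⟩
    · by_cases hf : f = e
      · exact hf ▸ hve
      · exact hprop ⟨f, hf⟩
    · obtain rfl | ⟨hf, hg⟩ := eq_or_ne_and_ne_of_apply_eq ht hfg
      · rfl
      · exact hsrc ⟨f, hf⟩ ⟨g, hg⟩ hfg
    · obtain rfl | ⟨hf, hg⟩ := eq_or_ne_and_ne_of_apply_eq hs hfg
      · rfl
      · exact htgt ⟨f, hf⟩ ⟨g, hg⟩ hfg

def contractionProj (hne : G.s e ≠ G.t e) (u : G.V) : {u : G.V // u ≠ G.t e} :=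
  if h : u = G.t e then ⟨G.s e, hne⟩ else ⟨u, h⟩

variable (hne : G.s e ≠ G.t e)

theorem contractionProj_of_ne {u : G.V} (hu : u ≠ G.t e) :
    contractionProj hne u = ⟨u, hu⟩ := dif_neg hu

theorem contractionProj_eq_iff_of_ne_target {u u' : G.V} (hu : u ≠ G.t e) (hu' : u' ≠ G.t e) :
    contractionProj hne u = contractionProj hne u' ↔ u = u' := by
  rw [contractionProj_of_ne hne hu, contractionProj_of_ne hne hu', Subtype.mk.injEq]

theorem contractionProj_eq_iff_of_ne_source {u u' : G.V} (hu : u ≠ G.s e) (hu' : u' ≠ G.s e) :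
    contractionProj hne u = contractionProj hne u' ↔ u = u' := by
  refine ⟨fun h => ?_, congrArg _⟩
  unfold contractionProj at h
  split_ifs at h with h₁ h₂ h₂ <;> simp only [Subtype.mk.injEq] at h
  · exact h₁.trans h₂.symm
  · exact absurd h.symm hu'
  · exact absurd h hu
  · exact h

def contractionColouringEquiv :
    ({u : G.V // u ≠ G.t e} → Fin k) ≃ {c : G.V → Fin k // c (G.s e) = c (G.t e)} where
  toFun c' := ⟨c' ∘ contractionProj hne, by simp [contractionProj, hne]⟩
  invFun c u := c.1 u.1
  left_inv c' := funext fun u => by simp [contractionProj_of_ne hne u.2]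
  right_inv c := by
    refine Subtype.ext (funext fun u => ?_)
    by_cases hu : u = G.t e
    · simp [contractionProj, hu, c.2]
    · simp [contractionProj_of_ne hne hu]

theorem isFlowing_contractClassical_iff (hs : ∀ f, G.s f = G.s e → f = e)
    (ht : ∀ f, G.t f = G.t e → f = e) (c' : {u : G.V // u ≠ G.t e} → Fin k) :
    (G.contractClassical e hne).IsFlowing k c' ↔
      (G.deleteEdge e).IsFlowing k (c' ∘ contractionProj hne) := by
  refine and_congr Iff.rfl (and_congr ?_ ?_)
  · refine forall₂_congr fun f g => imp_congr_left ?_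
    exact contractionProj_eq_iff_of_ne_target hne (fun h => f.2 (ht _ h)) (fun h => g.2 (ht _ h))
  · refine forall₂_congr fun f g => imp_congr_left ?_
    exact contractionProj_eq_iff_of_ne_source hne (fun h => f.2 (hs _ h)) (fun h => g.2 (hs _ h))

theorem tau_contractClassical (hs : ∀ f, G.s f = G.s e → f = e)
    (ht : ∀ f, G.t f = G.t e → f = e) :
    (G.contractClassical e hne).tau k =
      Nat.card {c : G.V → Fin k // (G.deleteEdge e).IsFlowing k c ∧ c (G.s e) = c (G.t e)} :=
  Nat.card_congr <|
    ((contractionColouringEquiv hne).subtypeEquiv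
      (isFlowing_contractClassical_iff hne hs ht)).trans <|
    (Equiv.subtypeSubtypeEquivSubtypeInter _ _).trans (Equiv.subtypeEquivRight fun _ => and_comm)

end Contraction

section Recolour

variable {H : DiGraph} {k : ℕ}

def recolourComponent (w : H.V) (σ : Equiv.Perm (Fin k)) (c : H.V → Fin k) : H.V → Fin k :=
  fun u => if H.connRel w u then σ (c u) else c u

theorem connRel_source_iff_target (w : H.V) (f : H.E) :
    H.connRel w (H.s f) ↔ H.connRel w (H.t f) :=
  have hf : H.connRel (H.s f) (H.t f) := .rel _ _ ⟨f, Or.inl ⟨rfl, rfl⟩⟩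
  ⟨fun h => h.trans _ _ _ hf, fun h => h.trans _ _ _ hf.symm⟩

variable {w : H.V}

theorem recolourComponent_self (σ : Equiv.Perm (Fin k)) (c : H.V → Fin k) :
    recolourComponent w σ c w = σ (c w) :=
  if_pos (.refl _)

theorem recolourComponent_of_not_connRel {v : H.V} (hv : ¬H.connRel w v)
    (σ : Equiv.Perm (Fin k)) (c : H.V → Fin k) : recolourComponent w σ c v = c v :=
  if_neg hv

theorem recolourComponent_recolourComponent (σ τ : Equiv.Perm (Fin k)) (c : H.V → Fin k) :
    recolourComponent w τ (recolourComponent w σ c) = recolourComponent w (τ * σ) c := by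
  funext u
  by_cases hu : H.connRel w u <;> simp [recolourComponent, hu]

theorem recolourComponent_one (c : H.V → Fin k) : recolourComponent w 1 c = c := by
  funext u
  by_cases hu : H.connRel w u <;> simp [recolourComponent, hu]

theorem IsFlowing.recolourComponent {c : H.V → Fin k} (hc : H.IsFlowing k c)
    (σ : Equiv.Perm (Fin k)) : H.IsFlowing k (recolourComponent w σ c) := by
  obtain ⟨hprop, hsrc, htgt⟩ := hc
  refine ⟨fun f => ?_, fun f g hfg => ?_, fun f g hfg => ?_⟩
  · have hst := connRel_source_iff_target w f
    by_cases hf : H.connRel w (H.s f)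
    · simpa [DiGraph.recolourComponent, hf, hst.mp hf] using hprop f
    · simpa [DiGraph.recolourComponent, hf, hst.not.mp hf] using hprop f
  · have hfg' : H.connRel w (H.s f) ↔ H.connRel w (H.s g) := by
      rw [connRel_source_iff_target, connRel_source_iff_target w g, hfg]
    by_cases hf : H.connRel w (H.s f)
    · simp [DiGraph.recolourComponent, hf, hfg'.mp hf, hsrc f g hfg]
    · simp [DiGraph.recolourComponent, hf, hfg'.not.mp hf, hsrc f g hfg]
  · have hfg' : H.connRel w (H.t f) ↔ H.connRel w (H.t g) := by
      rw [← connRel_source_iff_target, ← connRel_source_iff_target w g, hfg]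
    by_cases hf : H.connRel w (H.t f)
    · simp [DiGraph.recolourComponent, hf, hfg'.mp hf, htgt f g hfg]
    · simp [DiGraph.recolourComponent, hf, hfg'.not.mp hf, htgt f g hfg]

variable {v : H.V}

/-- A flowing colouring with `c v ≠ c w` is a flowing colouring with `c v = c w` (swap the
colours `c w` and `c v` on the component of `w`) together with the old colour of `w`. -/
def flowingNeEquiv (hvw : ¬H.connRel w v) :
    {c : H.V → Fin k // H.IsFlowing k c ∧ c v ≠ c w} ≃
      Σ c : {c : H.V → Fin k // H.IsFlowing k c ∧ c v = c w}, {d : Fin k // d ≠ c.1 v} where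
  toFun c := ⟨⟨recolourComponent w (Equiv.swap (c.1 w) (c.1 v)) c.1, c.2.1.recolourComponent _,
      by rw [recolourComponent_of_not_connRel hvw, recolourComponent_self, Equiv.swap_apply_left]⟩,
    ⟨c.1 w, c.2.2.symm.trans_eq (recolourComponent_of_not_connRel hvw _ _).symm⟩⟩
  invFun p := ⟨recolourComponent w (Equiv.swap (p.1.1 w) p.2.1) p.1.1, p.1.2.1.recolourComponent _,
    by rw [recolourComponent_of_not_connRel hvw, recolourComponent_self, Equiv.swap_apply_left]
       exact p.2.2.symm⟩
  left_inv c := by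
    refine Subtype.ext ?_
    simp only [recolourComponent_self, Equiv.swap_apply_left, recolourComponent_recolourComponent,
      Equiv.swap_comm (c.1 v), Equiv.swap_mul_self, recolourComponent_one]
  right_inv p := by
    obtain ⟨⟨c, _, hvw'⟩, d, _⟩ := p
    refine Sigma.subtype_ext (Subtype.ext ?_) ?_
    · simp only [recolourComponent_self, Equiv.swap_apply_left,
        recolourComponent_of_not_connRel hvw, recolourComponent_recolourComponent, ← hvw',
        Equiv.swap_comm d, Equiv.swap_mul_self, recolourComponent_one]
    · simp only [recolourComponent_self, Equiv.swap_apply_left]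

theorem card_flowing_ne_eq (hvw : ¬H.connRel v w) :
    Nat.card {c : H.V → Fin k // H.IsFlowing k c ∧ c v ≠ c w} =
      (k - 1) * Nat.card {c : H.V → Fin k // H.IsFlowing k c ∧ c v = c w} := by
  have hcard (a : Fin k) : Nat.card {d : Fin k // d ≠ a} = k - 1 := by
    simp [Nat.card_eq_fintype_card, Fintype.card_subtype_compl]
  rw [Nat.card_congr (flowingNeEquiv fun h => hvw h.symm), Nat.card_sigma]
  simp only [hcard, Finset.sum_const, Finset.card_univ, smul_eq_mul, Nat.card_eq_fintype_card,
    mul_comm]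

end Recolour

end DiGraph

theorem coloop_colouring_contraction_general (G : DiGraph)
    (htree : G.IsTreeD) (e : G.E)
    (hne : G.s e ≠ G.t e) (hco : DiGraph.IsColoop G e)
    (k : ℕ) :
    G.tau k = (k - 1) * (DiGraph.contractClassical G e hne).tau k := by
  have hs : ∀ f, G.s f = G.s e → f = e := fun _ => hco.eq_of_source_eq htree.2.loopless
  have ht : ∀ f, G.t f = G.t e → f = e := fun _ => hco.eq_of_target_eq htree.2.loopless
  calc G.tau k
      = Nat.card {c : G.V → Fin k // (G.deleteEdge e).IsFlowing k c ∧ c (G.s e) ≠ c (G.t e)} :=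
        Nat.card_congr (Equiv.subtypeEquivRight (DiGraph.isFlowing_iff_deleteEdge hs ht))
    _ = (k - 1) * Nat.card
          {c : G.V → Fin k // (G.deleteEdge e).IsFlowing k c ∧ c (G.s e) = c (G.t e)} :=
        DiGraph.card_flowing_ne_eq (htree.2.not_connRel_deleteEdge e)
    _ = (k - 1) * (G.contractClassical e hne).tau k := by
        rw [DiGraph.tau_contractClassical hne hs ht]

/-- If `G` is an MP-tree and `e = (v,w)` is a coloop of
`M_G`, then for every `k ≥ 1` the number of flowing `k`-colourings satisfies
`τ_G(k) = (k-1)·τ_{G/e}(k)`, where `G/e` is the classical contraction. -/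
theorem coloop_colouring_contraction (G : DiGraph) (hU : G.EdgeUnique)
    (hMP : G.IsMPDigraph) (htree : G.IsTreeD) (e : G.E)
    (hne : G.s e ≠ G.t e) (hco : DiGraph.IsColoop G e)
    (k : ℕ) (hk : 1 ≤ k) :
    G.tau k = (k - 1) * (DiGraph.contractClassical G e hne).tau k :=
  coloop_colouring_contraction_general G htree e hne hco k
end
end

section
/- Let G be an MP-forest. Then the following identity of polynomials in the variable α holds: Σ_{m ∈ Mult(G)} (-1)^{|E(m)|} α^{p_0(m)} = (-1)^{r(G)} · α^{|E(G)| - r(G) + p_0(G)} · T_{M_G}(1-α, 1), where p_0(H) denotes the number of connected components of a digraph H and r(G) is the rank of E(G) in M_G. (The left-hand side is the graded Euler characteristic χ_μ(G, α) of the multipath cochain complex of G with coefficients in a graded algebra of graded dimension α.) -/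
set_option autoImplicit false

noncomputable section

attribute [local instance] Classical.propDecidable

/-!
In a forest every edge set `m` spans a subgraph with `|V| - |m|` components, because each edge of
`m` joins two components of the others (otherwise it would close an undirected cycle). So the
left-hand side is `∑_{m ∈ Mult(G)} (-1)^{|m|} α^{|V| - |m|}`. At `y = 1` only the sets `A` with
`r(A) = |A|`, i.e. the multipaths, survive in the Tutte sum, so
`T(1 - α, 1) = ∑_{m ∈ Mult(G)} (-α)^{r(G) - |m|}`; since `|E| + p₀(G) = |V|`, the two sums agree
term by term.
-/

namespace Relation

variable {α : Type*}

theorem ReflTransGen.exists_isChain_nodup {r : α → α → Prop} {a b : α}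
    (h : ReflTransGen r a b) :
    ∃ l : List α, l.IsChain r ∧ l.Nodup ∧ l.head? = some a ∧ l.getLast? = some b := by
  induction h using ReflTransGen.head_induction_on with
  | refl => exact ⟨[b], .singleton b, List.nodup_singleton b, rfl, rfl⟩
  | @head x c hxc _ ih =>
    obtain ⟨l, hchain, hnd, hhead, hlast⟩ := ih
    by_cases hx : x ∈ l
    · -- shortcut the walk at the earlier visit of `x`
      obtain ⟨l₁, l₂, rfl⟩ := List.append_of_mem hx
      refine ⟨x :: l₂, hchain.suffix ⟨l₁, rfl⟩, hnd.sublist (List.sublist_append_right _ _),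
        rfl, ?_⟩
      rwa [List.getLast?_append_of_ne_nil _ (List.cons_ne_nil _ _)] at hlast
    · rcases l with _ | ⟨y, l'⟩
      · simp at hhead
      · cases hhead
        refine ⟨x :: c :: l', hchain.cons_cons hxc, List.nodup_cons.mpr ⟨hx, hnd⟩, rfl, ?_⟩
        rwa [List.getLast?_cons_cons]

theorem card_quotient_eqvGen_of_forall_not [Finite α] {r : α → α → Prop}
    (h : ∀ x y, ¬r x y) : Nat.card (Quotient (EqvGen.setoid r)) = Nat.card α := by
  have hbot : EqvGen.setoid r = ⊥ :=
    le_bot_iff.mp (Setoid.eqvGen_le fun x y hxy => (h x y hxy).elim)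
  rw [hbot]
  exact Nat.card_congr Setoid.quotientBotEquiv

theorem card_quotient_eqvGen_join [Finite α] {r : α → α → Prop} {a b : α}
    (hab : ¬EqvGen r a b) :
    Nat.card (Quotient (EqvGen.setoid fun x y => r x y ∨ (x = a ∧ y = b) ∨ (x = b ∧ y = a))) +
        1 =
      Nat.card (Quotient (EqvGen.setoid r)) := by
  set S := EqvGen.setoid r
  set r' : α → α → Prop := fun x y => r x y ∨ (x = a ∧ y = b) ∨ (x = b ∧ y = a)
  have hne : (⟦a⟧ : Quotient S) ≠ ⟦b⟧ := fun h => hab (Quotient.exact h)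
  -- the classes of `r'` are those of `r`, with the class of `b` merged into that of `a`
  let g : Quotient S → Quotient S := fun x => if x = ⟦b⟧ then ⟦a⟧ else x
  have hker : EqvGen.setoid r' = Setoid.ker (g ∘ Quotient.mk S) := by
    apply le_antisymm
    · apply Setoid.eqvGen_le
      rintro x y (hxy | ⟨rfl, rfl⟩ | ⟨rfl, rfl⟩)
      · exact congrArg g (Quotient.sound (EqvGen.rel _ _ hxy))
      · simp [Setoid.ker_def, g, hne]
      · simp [Setoid.ker_def, g, hne]
    · intro x y hxy
      let ψ : Quotient S → Quotient (EqvGen.setoid r') :=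
        Quotient.map id fun u v huv => EqvGen.mono (fun _ _ => Or.inl) _ _ huv
      have hψ : ψ ⟦a⟧ = ψ ⟦b⟧ := Quotient.sound (EqvGen.rel _ _ (Or.inr (Or.inl ⟨rfl, rfl⟩)))
      suffices ψ ⟦x⟧ = ψ ⟦y⟧ from Quotient.exact this
      simp only [Setoid.ker_def, Function.comp_apply, g] at hxy
      split_ifs at hxy with hx hy hy <;> grind
  have hrange : Set.range g = {⟦b⟧}ᶜ := by
    ext x
    simp only [Set.mem_range, Set.mem_compl_singleton_iff]
    constructor
    · rintro ⟨y, rfl⟩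
      dsimp only [g]
      split_ifs <;> assumption
    · exact fun hx => ⟨x, if_neg hx⟩
  rw [hker, Nat.card_congr (Setoid.quotientKerEquivRange _),
    (Quotient.mk_surjective (s := S)).range_comp, hrange, Nat.card_coe_set_eq,
    ← Set.ncard_singleton (⟦b⟧ : Quotient S), Set.ncard_compl_add_ncard]

end Relation

theorem neg_one_pow_mul_pow_eq {R : Type*} [CommRing R] (x : R) {a r n : ℕ} (har : a ≤ r)
    (hrn : r ≤ n) : (-1) ^ a * x ^ (n - a) = (-1) ^ r * x ^ (n - r) * (-x) ^ (r - a) := by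
  obtain ⟨d, rfl⟩ := Nat.exists_eq_add_of_le har
  obtain ⟨k, rfl⟩ := Nat.exists_eq_add_of_le hrn
  rw [show a + d + k - a = d + k by omega, Nat.add_sub_cancel_left, Nat.add_sub_cancel_left,
    neg_pow]
  ring_nf
  rw [pow_mul', neg_one_sq, one_pow, mul_one]

namespace DiGraph

open Relation

variable {G : DiGraph}

instance (G : DiGraph) (R : Finset G.E) : Std.Symm (G.adjIn R) :=
  ⟨fun _ _ ⟨g, hg, h⟩ => ⟨g, hg, h.symm⟩⟩

theorem hasUndirCycle_of_isChain {R : Finset G.E} {e : G.E} (he : e ∉ R) {l : List G.V}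
    (hl : l.IsChain (G.adjIn R)) (hnd : l.Nodup) (hhead : l.head? = some (G.s e))
    (hlast : l.getLast? = some (G.t e)) : G.HasUndirCycle := by
  set n := l.length
  have hn : 0 < n := List.length_pos_iff.mpr (by rintro rfl; simp at hhead)
  have h0 : l[0] = G.s e := by
    simpa [List.head?_eq_getElem?, List.getElem?_eq_getElem hn] using hhead
  have hn1 : l[n - 1] = G.t e := by
    simpa [List.getLast?_eq_getElem?, List.getElem?_eq_getElem (Nat.sub_lt hn one_pos)] using hlast
  have hinj : ∀ {i j : ℕ} (hi : i < n) (hj : j < n), l[i] = l[j] → i = j :=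
    fun hi hj h => (hnd.getElem_inj_iff).mp h
  choose ed hedR hed using List.isChain_iff_getElem.mp hl
  let cyc : Fin n → G.E := fun i => if hi : i.val + 1 < n then ed i hi else e
  refine ⟨n, cyc, l.get, hn, fun i j hij => ?_, List.nodup_iff_injective_get.mp hnd, fun i => ?_⟩
  · simp only [cyc] at hij
    split_ifs at hij with hi hj hj
    · have h1 := hed i hi
      have h2 := hed j hj
      rw [hij] at h1
      apply Fin.ext
      rcases h1 with ⟨h1, h1'⟩ | ⟨h1, h1'⟩ <;> rcases h2 with ⟨h2, h2'⟩ | ⟨h2, h2'⟩ <;>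
        have := hinj _ _ (h1.symm.trans h2) <;> have := hinj _ _ (h1'.symm.trans h2') <;> omega
    · exact absurd (hij ▸ hedR i hi) he
    · exact absurd (hij ▸ hedR j hj) he
    · exact Fin.ext (by omega)
  · by_cases hi : i.val + 1 < n
    · simp only [cyc, dif_pos hi, Nat.mod_eq_of_lt hi]
      rcases hed i hi with h | h
      · exact Or.inl h
      · exact Or.inr h.symm
    · have hi' : i.val = n - 1 := by omega
      simp only [cyc, dif_neg hi, show i.val + 1 = n by omega, Nat.mod_self]
      exact Or.inr ⟨by simp [hi', hn1], by simp [h0]⟩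

theorem IsForestD.not_eqvGen_adjIn (hf : G.IsForestD) {R : Finset G.E} {e : G.E}
    (he : e ∉ R) : ¬EqvGen (G.adjIn R) (G.s e) (G.t e) := by
  rw [EqvGen.eqvGen_eq_reflTransGen]
  intro h
  obtain ⟨l, hl, hnd, hhead, hlast⟩ := h.exists_isChain_nodup
  exact hf (hasUndirCycle_of_isChain he hl hnd hhead hlast)

theorem adjIn_insert (e : G.E) (m : Finset G.E) :
    G.adjIn (insert e m) =
      fun x y => G.adjIn m x y ∨ (x = G.s e ∧ y = G.t e) ∨ (x = G.t e ∧ y = G.s e) := by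
  ext x y
  simp only [adjIn, Finset.mem_insert]
  grind

theorem adj_subgraphOn (m : Finset G.E) : (G.subgraphOn m).adj = G.adjIn m := by
  ext x y
  exact ⟨fun ⟨g, h⟩ => ⟨g.val, g.property, h⟩, fun ⟨g, hg, h⟩ => ⟨⟨g, hg⟩, h⟩⟩

theorem numComponents_subgraphOn_univ :
    (G.subgraphOn Finset.univ).numComponents = G.numComponents := by
  have : G.adjIn Finset.univ = G.adj := by
    ext x y
    simp [adjIn, adj]
  simp only [numComponents, adj_subgraphOn, this]
  rfl

theorem IsForestD.card_quotient_adjIn_add_card (hf : G.IsForestD) (m : Finset G.E) :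
    Nat.card (Quotient (EqvGen.setoid (G.adjIn m))) + m.card = Fintype.card G.V := by
  induction m using Finset.induction_on with
  | empty =>
    rw [Finset.card_empty, add_zero, ← Nat.card_eq_fintype_card]
    exact card_quotient_eqvGen_of_forall_not fun x y ⟨_, hg, _⟩ => Finset.notMem_empty _ hg
  | @insert e m he ih =>
    rw [Finset.card_insert_of_notMem he, adjIn_insert, ← ih,
      ← card_quotient_eqvGen_join (hf.not_eqvGen_adjIn he)]
    omega

theorem IsForestD.numComponents_subgraphOn_add_card (hf : G.IsForestD) (m : Finset G.E) :
    (G.subgraphOn m).numComponents + m.card = Fintype.card G.V := by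
  rw [numComponents, adj_subgraphOn]
  exact hf.card_quotient_adjIn_add_card m

theorem isMultipath_empty (G : DiGraph) : G.IsMultipath ∅ := by
  refine ⟨by simp, by simp, by simp, ?_⟩
  rintro ⟨c, ⟨hne, -⟩, hc⟩
  obtain ⟨g, hg⟩ := List.exists_mem_of_ne_nil c hne
  exact Finset.notMem_empty g (hc g hg)

theorem mrank_le_card (A : Finset G.E) : G.mrank A ≤ A.card :=
  Finset.sup_le fun _ hm =>
    Finset.card_le_card (Finset.mem_powerset.mp (Finset.mem_filter.mp hm).1)

theorem card_le_mrank {A B : Finset G.E} (hA : G.IsMultipath A) (hAB : A ⊆ B) :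
    A.card ≤ G.mrank B :=
  Finset.le_sup (f := Finset.card) (Finset.mem_filter.mpr ⟨Finset.mem_powerset.mpr hAB, hA⟩)

theorem mrank_eq_card_iff {A : Finset G.E} : G.mrank A = A.card ↔ G.IsMultipath A := by
  refine ⟨fun h => ?_, fun hA => (mrank_le_card A).antisymm (card_le_mrank hA subset_rfl)⟩
  obtain ⟨m, hm, hcard⟩ := Finset.exists_mem_eq_sup _
    ⟨∅, Finset.mem_filter.mpr ⟨Finset.empty_mem_powerset A, G.isMultipath_empty⟩⟩ Finset.card
  obtain ⟨hmA, hmult⟩ := Finset.mem_filter.mp hm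
  rwa [← Finset.eq_of_subset_of_card_le (Finset.mem_powerset.mp hmA) (h.symm.trans hcard).le]

theorem tutte_apply_one (x : ℤ) :
    G.tutte x 1 = ∑ A : Finset G.E,
      if G.IsMultipath A then (x - 1) ^ (G.mrank Finset.univ - A.card) else 0 := by
  refine Finset.sum_congr rfl fun A _ => ?_
  split_ifs with hA
  · rw [mrank_eq_card_iff.mpr hA, Nat.sub_self, pow_zero, mul_one]
  · have : A.card - G.mrank A ≠ 0 := by
      have := mrank_le_card A
      have := mt mrank_eq_card_iff.mp hA
      omega
    rw [sub_self, zero_pow this, mul_zero]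

end DiGraph

open DiGraph in
theorem euler_characteristic_tutte_general (G : DiGraph)
    (hforest : G.IsForestD) (α : ℤ) :
    (∑ m : Finset G.E,
        if G.IsMultipath m then
          (-1 : ℤ) ^ m.card * α ^ (numComponents (subgraphOn G m))
        else 0) =
      (-1 : ℤ) ^ (G.mrank Finset.univ) *
        α ^ (Fintype.card G.E - G.mrank Finset.univ + numComponents G) *
        G.tutte (1 - α) 1 := by
  have hcomp := hforest.numComponents_subgraphOn_add_card
  have hEV : numComponents G + Fintype.card G.E = Fintype.card G.V := by
    simpa [numComponents_subgraphOn_univ] using hcomp Finset.univ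
  have hrE : G.mrank Finset.univ ≤ Fintype.card G.E := mrank_le_card Finset.univ
  have hE : Fintype.card G.E - G.mrank Finset.univ + numComponents G =
      Fintype.card G.V - G.mrank Finset.univ := by omega
  rw [hE, tutte_apply_one, Finset.mul_sum]
  refine Finset.sum_congr rfl fun m _ => ?_
  split_ifs with hm
  · rw [show (G.subgraphOn m).numComponents = Fintype.card G.V - m.card by have := hcomp m; omega,
      sub_sub_cancel_left]
    exact neg_one_pow_mul_pow_eq α (card_le_mrank hm (Finset.subset_univ m)) (by omega)
  · rw [mul_zero]

open DiGraph in
/-- For an MP-forest `G` and every `α`,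
`χ_μ(G,α) = Σ_{m ∈ Mult(G)} (-1)^{|E(m)|} α^{p₀(m)}
  = (-1)^{r(G)} · α^{|E(G)| - r(G) + p₀(G)} · T_{M_G}(1-α, 1)`. -/
theorem euler_characteristic_tutte (G : DiGraph) (hU : G.EdgeUnique)
    (hMP : G.IsMPDigraph) (hforest : G.IsForestD) (α : ℤ) :
    (∑ m : Finset G.E,
        if G.IsMultipath m then
          (-1 : ℤ) ^ m.card * α ^ (numComponents (subgraphOn G m))
        else 0) =
      (-1 : ℤ) ^ (G.mrank Finset.univ) *
        α ^ (Fintype.card G.E - G.mrank Finset.univ + numComponents G) *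
        G.tutte (1 - α) 1 :=
  euler_characteristic_tutte_general G hforest α
end
end
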